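/- There exists a family 𝒜 = {A_1, A_2, A_3, A_4} of four open subsets of ℝ² such that every three of the sets have nonempty intersection, the intersection of all four sets is empty, and for every σ ⊆ {1,2,3,4} with |σ| ∈ {2,3} the set A_σ = ⋂_{i∈σ} A_i is open and path-connected. In particular, f_3(𝒜) = 0 and f_2(𝒜) = 4. -/

import Mathlib

/-!
Take three linear functionals `ℓ₀, ℓ₁, ℓ₂` on `ℝ²` summing to zero, let `A_j = {ℓ_j < 1}` for
`j < 3`, and let `A_3 = ⋃ k, {ℓ_k > 1}` be the complement of the closed triangle `⋂ j, {ℓ_j ≤ 1}`.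
A point lies in `A_σ` when it is below `1` on the functionals indexed by `τ = σ ∩ {0, 1, 2}` and,
if `3 ∈ σ`, above `1` on some functional (necessarily one outside `τ`). Both conditions survive
along segments ending at a point `x₀` that is below `1` exactly on `τ`, so `A_σ` is star-convex
about `x₀` and hence path-connected. Such an `x₀` exists for every nonempty `τ` (and `x₀ = 0`
serves when `3 ∉ σ`), so among the proper `σ` only `σ = {3}` escapes the argument.
-/

/-- `fNum A k` is `f_k(𝒜)`: the number of subsets `σ` of the index set with
`|σ| = k+1` such that `⋂ i ∈ σ, A i` is nonempty. -/
noncomputable def fNum {α : Type*} {n : ℕ} (A : Fin n → Set α) (k : ℕ) : ℕ :=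
  Nat.card {σ : Finset (Fin n) // σ.card = k + 1 ∧ (⋂ i ∈ σ, A i).Nonempty}

open Set

theorem fNum_eq_choose {α : Type*} {n k : ℕ} (A : Fin n → Set α)
    (h : ∀ σ : Finset (Fin n), σ.card = k + 1 → (⋂ i ∈ σ, A i).Nonempty) :
    fNum A k = n.choose (k + 1) := by
  have e : ∀ σ : Finset (Fin n), (σ.card = k + 1 ∧ (⋂ i ∈ σ, A i).Nonempty) ↔ σ.card = k + 1 :=
    fun σ => ⟨And.left, fun hσ => ⟨hσ, h σ hσ⟩⟩
  rw [fNum, Nat.card_congr (Equiv.subtypeEquivRight e), Nat.card_eq_fintype_card,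
    Fintype.card_finset_len, Fintype.card_fin]

theorem fNum_eq_zero_of_iInter_eq_empty {α : Type*} {k : ℕ} (A : Fin (k + 1) → Set α)
    (h : ⋂ i, A i = ∅) : fNum A k = 0 := by
  rw [fNum, Nat.card_eq_zero]
  left
  constructor
  rintro ⟨σ, hcard, hne⟩
  obtain rfl : σ = Finset.univ := Finset.eq_univ_of_card σ (by simpa using hcard)
  simp [h] at hne

section HalfSpaceFamily

variable {E : Type*} [AddCommGroup E] [Module ℝ E] [TopologicalSpace E] {n : ℕ}

def halfSpaceFamily (ℓ : Fin n → E →L[ℝ] ℝ) : Fin (n + 1) → Set E :=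
  Fin.lastCases (⋃ k, {x | 1 < ℓ k x}) fun j => {x | ℓ j x < 1}

variable (ℓ : Fin n → E →L[ℝ] ℝ)

@[simp]
theorem halfSpaceFamily_last : halfSpaceFamily ℓ (Fin.last n) = ⋃ k, {x | 1 < ℓ k x} :=
  Fin.lastCases_last

@[simp]
theorem halfSpaceFamily_castSucc (j : Fin n) :
    halfSpaceFamily ℓ j.castSucc = {x | ℓ j x < 1} :=
  Fin.lastCases_castSucc j

theorem isOpen_halfSpaceFamily (i : Fin (n + 1)) : IsOpen (halfSpaceFamily ℓ i) := by
  induction i using Fin.lastCases with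
  | last => simpa using isOpen_iUnion fun k => isOpen_lt continuous_const (ℓ k).continuous
  | cast j => simpa using isOpen_lt (ℓ j).continuous continuous_const

theorem iInter_halfSpaceFamily_eq_empty : ⋂ i, halfSpaceFamily ℓ i = ∅ := by
  refine eq_empty_of_forall_notMem fun x hx => ?_
  rw [mem_iInter, Fin.forall_fin_succ'] at hx
  obtain ⟨hlt, hgt⟩ := hx
  obtain ⟨k, hk⟩ : ∃ k, 1 < ℓ k x := by simpa using hgt
  exact hk.not_gt (by simpa using hlt k)

theorem mem_biInter_halfSpaceFamily {σ : Finset (Fin (n + 1))} {x : E} :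
    x ∈ ⋂ i ∈ σ, halfSpaceFamily ℓ i ↔
      (∀ j, j.castSucc ∈ σ → ℓ j x < 1) ∧ (Fin.last n ∈ σ → ∃ k, 1 < ℓ k x) := by
  simp only [mem_iInter₂]
  rw [Fin.forall_fin_succ']
  simp

theorem starConvex_biInter_halfSpaceFamily {σ : Finset (Fin (n + 1))} {x₀ : E}
    (hlt : ∀ j, j.castSucc ∈ σ → ℓ j x₀ < 1)
    (hgt : Fin.last n ∈ σ → ∀ k, k.castSucc ∉ σ → 1 < ℓ k x₀) :
    StarConvex ℝ x₀ (⋂ i ∈ σ, halfSpaceFamily ℓ i) := by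
  intro y hy a b ha hb hab
  rw [mem_biInter_halfSpaceFamily] at hy ⊢
  obtain ⟨hy_lt, hy_gt⟩ := hy
  refine ⟨fun j hj => ?_, fun hσ => ?_⟩
  · simpa using convex_Iio (1 : ℝ) (hlt j hj) (hy_lt j hj) ha hb hab
  · obtain ⟨k, hk⟩ := hy_gt hσ
    have hkσ : k.castSucc ∉ σ := fun hkσ => (hy_lt k hkσ).not_gt hk
    exact ⟨k, by simpa using convex_Ioi (1 : ℝ) (hgt hσ k hkσ) hk ha hb hab⟩

theorem isPathConnected_biInter_halfSpaceFamily [ContinuousAdd E] [ContinuousSMul ℝ E]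
    (hsep : ∀ τ : Finset (Fin n), τ.Nonempty → τ ≠ Finset.univ →
      ∃ x, (∀ j ∈ τ, ℓ j x < 1) ∧ ∀ k ∉ τ, 1 < ℓ k x)
    {σ : Finset (Fin (n + 1))} (h_two_le : 2 ≤ σ.card) (h_le : σ.card ≤ n) :
    IsPathConnected (⋂ i ∈ σ, halfSpaceFamily ℓ i) := by
  by_cases hlast : Fin.last n ∈ σ
  · set τ := Finset.univ.filter fun j : Fin n => j.castSucc ∈ σ
    have hτ : τ.Nonempty := by
      obtain ⟨a, ha, b, hb, hab⟩ := Finset.one_lt_card.1 h_two_le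
      obtain ⟨i, hi, hi_ne⟩ : ∃ i ∈ σ, i ≠ Fin.last n := by
        by_cases ha_last : a = Fin.last n
        · exact ⟨b, hb, ha_last ▸ hab.symm⟩
        · exact ⟨a, ha, ha_last⟩
      obtain ⟨j, rfl⟩ := Fin.exists_castSucc_eq.2 hi_ne
      exact ⟨j, by simpa [τ] using hi⟩
    obtain ⟨k, hk⟩ : ∃ k : Fin n, k.castSucc ∉ σ := by
      obtain ⟨i, hi⟩ : ∃ i, i ∉ σ := by
        by_contra! h
        have := Finset.eq_univ_of_forall h ▸ h_le
        simp at this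
      obtain ⟨k, rfl⟩ := Fin.exists_castSucc_eq.2 (ne_of_mem_of_not_mem hlast hi).symm
      exact ⟨k, hi⟩
    have hkτ : k ∉ τ := by simpa [τ] using hk
    obtain ⟨x₀, hlt, hgt⟩ := hsep τ hτ fun h => hkτ (h ▸ Finset.mem_univ k)
    have hlt' : ∀ j, j.castSucc ∈ σ → ℓ j x₀ < 1 := fun j hj => hlt j (by simpa [τ] using hj)
    have hgt' : ∀ k : Fin n, k.castSucc ∉ σ → 1 < ℓ k x₀ :=
      fun k hk => hgt k (by simpa [τ] using hk)
    refine (starConvex_biInter_halfSpaceFamily ℓ hlt' fun _ => hgt').isPathConnected ?_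
    exact (mem_biInter_halfSpaceFamily ℓ).2 ⟨hlt', fun _ => ⟨k, hgt' k hk⟩⟩
  · have hlt : ∀ j, j.castSucc ∈ σ → ℓ j 0 < 1 := by simp
    refine (starConvex_biInter_halfSpaceFamily ℓ hlt fun h => absurd h hlast).isPathConnected ?_
    exact (mem_biInter_halfSpaceFamily ℓ).2 ⟨hlt, fun h => absurd h hlast⟩

end HalfSpaceFamily

noncomputable def triangleFunctionals : Fin 3 → EuclideanSpace ℝ (Fin 2) →L[ℝ] ℝ :=
  ![EuclideanSpace.proj 0, EuclideanSpace.proj 1, -EuclideanSpace.proj 0 - EuclideanSpace.proj 1]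

@[simp]
theorem triangleFunctionals_zero (x : EuclideanSpace ℝ (Fin 2)) :
    triangleFunctionals 0 x = x 0 :=
  rfl

@[simp]
theorem triangleFunctionals_one (x : EuclideanSpace ℝ (Fin 2)) :
    triangleFunctionals 1 x = x 1 :=
  rfl

@[simp]
theorem triangleFunctionals_two (x : EuclideanSpace ℝ (Fin 2)) :
    triangleFunctionals 2 x = -x 0 - x 1 :=
  rfl

theorem exists_triangleFunctionals_lt_one_iff_mem (τ : Finset (Fin 3)) (hτ : τ.Nonempty)
    (hτ_ne : τ ≠ Finset.univ) :
    ∃ x, (∀ j ∈ τ, triangleFunctionals j x < 1) ∧ ∀ k ∉ τ, 1 < triangleFunctionals k x := by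
  have : τ = {0} ∨ τ = {1} ∨ τ = {2} ∨ τ = {0, 1} ∨ τ = {0, 2} ∨ τ = {1, 2} := by
    revert τ; decide
  rcases this with rfl | rfl | rfl | rfl | rfl | rfl
  · exact ⟨!₂[-4, 2], by norm_num [Fin.forall_fin_succ]⟩
  · exact ⟨!₂[2, -4], by norm_num [Fin.forall_fin_succ]⟩
  · exact ⟨!₂[2, 2], by norm_num [Fin.forall_fin_succ]⟩
  · exact ⟨!₂[-1, -1], by norm_num [Fin.forall_fin_succ]⟩
  · exact ⟨!₂[0, 2], by norm_num [Fin.forall_fin_succ]⟩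
  · exact ⟨!₂[2, 0], by norm_num [Fin.forall_fin_succ]⟩

/-- **Example with four sets.** There are four open sets in `ℝ²` such that every three
of them intersect, all four have empty intersection, and every intersection of two or
three of them is open and path-connected. In particular `f_3(𝒜) = 0` and `f_2(𝒜) = 4`. -/
theorem four_sets_example :
    ∃ A : Fin 4 → Set (EuclideanSpace ℝ (Fin 2)),
      (∀ i, IsOpen (A i)) ∧
      (∀ σ : Finset (Fin 4), σ.card = 3 → (⋂ i ∈ σ, A i).Nonempty) ∧
      (⋂ i, A i) = ∅ ∧
      (∀ σ : Finset (Fin 4), σ.card = 2 ∨ σ.card = 3 →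
        IsOpen (⋂ i ∈ σ, A i) ∧ IsPathConnected (⋂ i ∈ σ, A i)) ∧
      fNum A 3 = 0 ∧ fNum A 2 = 4 := by
  set A := halfSpaceFamily triangleFunctionals
  have hpath : ∀ σ : Finset (Fin 4), σ.card = 2 ∨ σ.card = 3 → IsPathConnected (⋂ i ∈ σ, A i) :=
    fun σ hσ => isPathConnected_biInter_halfSpaceFamily _
      exists_triangleFunctionals_lt_one_iff_mem (by omega) (by omega)
  have htriple : ∀ σ : Finset (Fin 4), σ.card = 3 → (⋂ i ∈ σ, A i).Nonempty :=
    fun σ hσ => (hpath σ (Or.inr hσ)).nonempty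
  have hempty : ⋂ i, A i = ∅ := iInter_halfSpaceFamily_eq_empty _
  refine ⟨A, isOpen_halfSpaceFamily _, htriple, hempty, fun σ hσ => ⟨?_, hpath σ hσ⟩,
    fNum_eq_zero_of_iInter_eq_empty A hempty, fNum_eq_choose A htriple⟩
  exact isOpen_biInter_finset fun i _ => isOpen_halfSpaceFamily _ i
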